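/- arXiv:1809.04242 — 2 statements merged into one kernel-verified Lean document; each statement's English description precedes it below -/
import Mathlib

section
/- Let n ≥ 1, let 1 ≤ m < n, and let w, u be permutations of {1,2,…,n} with w →^{r_m} u. Then the set {w(1), w(2), …, w(m)} ∪ {w(b) : m < b ≤ n and w(b) > u(b)} has exactly m + ℓ(u) − ℓ(w) elements. -/
/-! Since every `aᵢ < m ≤ bⱼ` and the `bᵢ` are distinct, position `bᵢ` is moved by the
single transposition `τ_{aᵢbᵢ}`, which puts there the value `v(aᵢ)` of the current permutation
`v`; that step raises the length, and `ℓ(v τ_{ab}) > ℓ(v)` forces `v(a) < v(b) = w(bᵢ)`, so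
`u(bᵢ) < w(bᵢ)`. Positions beyond `m` outside `{bᵢ}` keep their value. So the second set is
`w({b₁,…,bₛ})`, disjoint from `w({1,…,m})`, and `s = ℓ(u) − ℓ(w)`.
The length criterion comes from injecting the inversions of `v` into those of `v τ_{ab}`
other than `(a, b)`: an inversion is carried along by `τ_{ab}` unless `τ_{ab}` reverses it. -/

/-- The length (number of inversions) of a permutation of `Fin n`
(representing `{1,…,n}` with `i : Fin n` standing for `i+1`). -/
def invLength {n : ℕ} (w : Equiv.Perm (Fin n)) : ℕ :=
  (Finset.univ.filter fun p : Fin n × Fin n => p.1 < p.2 ∧ w p.2 < w p.1).card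

/-- `w τ_{a₁b₁} ⋯ τ_{aₛbₛ}` for the list of pairs `L = [(a₁,b₁),…,(aₛ,bₛ)]`. -/
def chainProd {n : ℕ} (w : Equiv.Perm (Fin n)) (L : List (Fin n × Fin n)) :
    Equiv.Perm (Fin n) :=
  w * (L.map fun p => Equiv.swap p.1 p.2).prod

/-- The list `L = [(a₁,b₁),…,(aₛ,bₛ)]` is a chain witnessing `w ≤ₘ u`:
each `aᵢ ≤ m < bᵢ` (in 1-indexed terms, i.e. `(aᵢ : ℕ) < m ≤ (bᵢ : ℕ)` in 0-indexed `Fin n`),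
`u = w τ_{a₁b₁} ⋯ τ_{aₛbₛ}`, and `ℓ(w τ_{a₁b₁} ⋯ τ_{aᵢbᵢ}) = ℓ(w) + i` for all `i ≤ s`. -/
def IsMChain {n : ℕ} (m : ℕ) (w u : Equiv.Perm (Fin n)) (L : List (Fin n × Fin n)) : Prop :=
  (∀ p ∈ L, (p.1 : ℕ) < m ∧ m ≤ (p.2 : ℕ)) ∧
  u = chainProd w L ∧
  ∀ i, i ≤ L.length → invLength (chainProd w (L.take i)) = invLength w + i

/-- The `m`-Bruhat order `w ≤ₘ u`. -/
def mBruhat {n : ℕ} (m : ℕ) (w u : Equiv.Perm (Fin n)) : Prop :=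
  ∃ L, IsMChain m w u L

/-- `w →^{r_m} u` : as `w ≤ₘ u`, with the `bᵢ` pairwise distinct. -/
def rmRel {n : ℕ} (m : ℕ) (w u : Equiv.Perm (Fin n)) : Prop :=
  ∃ L, IsMChain m w u L ∧ (L.map Prod.snd).Nodup

open Equiv Finset

lemma apply_swap_lt_apply_swap_of_swap_lt_swap {α β : Type*} [LinearOrder α] [LinearOrder β]
    (f : α → β) {a b x y : α} (hab : a < b) (hf : f a < f b) (hxy : x < y)
    (hswap : swap a b y < swap a b x) (hfxy : f y < f x) :
    f (swap a b y) < f (swap a b x) := by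
  rw [swap_apply_def, swap_apply_def] at *
  split_ifs at * <;> subst_vars <;> order

section invLength

variable {n : ℕ} {v : Perm (Fin n)} {a b : Fin n}

def inversions (v : Perm (Fin n)) : Finset (Fin n × Fin n) :=
  {p | p.1 < p.2 ∧ v p.2 < v p.1}

@[simp]
lemma mem_inversions {p : Fin n × Fin n} : p ∈ inversions v ↔ p.1 < p.2 ∧ v p.2 < v p.1 := by
  simp [inversions]

lemma card_inversions (v : Perm (Fin n)) : #(inversions v) = invLength v := rfl

lemma invLength_lt_invLength_mul_swap (hab : a < b) (hv : v a < v b) :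
    invLength v < invLength (v * swap a b) := by
  set τ := swap a b
  let g : Fin n × Fin n → Fin n × Fin n := fun p =>
    if τ p.1 < τ p.2 then (τ p.1, τ p.2) else p
  have hab_mem : (a, b) ∈ inversions (v * τ) := by simpa [τ] using ⟨hab, hv⟩
  have hmaps : ∀ p ∈ inversions v, g p ∈ (inversions (v * τ)).erase (a, b) := by
    rintro ⟨x, y⟩ hp
    rw [mem_inversions] at hp
    by_cases h : τ x < τ y
    · have hne : (τ x, τ y) ≠ (a, b) := by
        intro hxy
        simp only [Prod.mk.injEq, τ, swap_apply_eq_iff, swap_apply_left, swap_apply_right] at hxy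
        exact absurd (hxy.1 ▸ hxy.2 ▸ hp.1) hab.not_gt
      simpa [g, h, τ, hne] using hp.2
    · have hne : (x, y) ≠ (a, b) := by
        rintro ⟨⟩
        exact absurd hp.2 hv.not_gt
      have hswap : τ y < τ x := lt_of_le_of_ne (not_lt.1 h) (τ.injective.ne hp.1.ne')
      simpa [g, h, hne, hp.1] using
        apply_swap_lt_apply_swap_of_swap_lt_swap v hab hv hp.1 hswap hp.2
  have hinj : Set.InjOn g (inversions v) := by
    rintro ⟨x, y⟩ hp ⟨x', y'⟩ hq hpq
    simp only [mem_coe, mem_inversions] at hp hq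
    by_cases h : τ x < τ y <;> by_cases h' : τ x' < τ y' <;>
      simp only [g, h, h', if_true, if_false, Prod.mk.injEq, τ.injective.eq_iff] at hpq
    · rw [hpq.1, hpq.2]
    · rw [← hpq.1, ← hpq.2, swap_apply_self, swap_apply_self] at h'
      exact absurd hp.1 h'
    · rw [hpq.1, hpq.2, swap_apply_self, swap_apply_self] at h
      exact absurd hq.1 h
    · rw [hpq.1, hpq.2]
  have hcard := card_le_card_of_injOn g hmaps hinj
  rw [card_erase_of_mem hab_mem] at hcard
  have hpos := card_pos.2 ⟨_, hab_mem⟩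
  rw [← card_inversions, ← card_inversions]
  omega

lemma invLength_lt_invLength_mul_swap_iff (hab : a < b) :
    invLength v < invLength (v * swap a b) ↔ v a < v b := by
  refine ⟨fun hlt => ?_, invLength_lt_invLength_mul_swap hab⟩
  by_contra! hle
  have hvτ : (v * swap a b) a < (v * swap a b) b := by
    simpa using lt_of_le_of_ne hle (v.injective.ne hab.ne')
  have := invLength_lt_invLength_mul_swap hab hvτ
  rw [mul_swap_mul_self] at this
  exact lt_asymm hlt this

end invLength

section chainProd

variable {n : ℕ} {w : Perm (Fin n)}

lemma chainProd_cons (p : Fin n × Fin n) (L : List (Fin n × Fin n)) :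
    chainProd w (p :: L) = chainProd (w * swap p.1 p.2) L := by
  simp [chainProd, mul_assoc]

lemma chainProd_apply_of_forall_ne {L : List (Fin n × Fin n)} {c : Fin n}
    (hc : ∀ p ∈ L, p.1 ≠ c ∧ p.2 ≠ c) : chainProd w L c = w c := by
  induction L generalizing w with
  | nil => simp [chainProd]
  | cons p L ih =>
    simp only [List.forall_mem_cons] at hc
    rw [chainProd_cons, ih hc.2, Perm.mul_apply, swap_apply_of_ne_of_ne hc.1.1.symm hc.1.2.symm]

end chainProd

namespace IsMChain

variable {n m : ℕ} {w u : Perm (Fin n)} {p : Fin n × Fin n} {L : List (Fin n × Fin n)}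

lemma fst_ne (h : IsMChain m w u L) {q : Fin n × Fin n} (hq : q ∈ L) {c : Fin n}
    (hc : m ≤ c) : q.1 ≠ c :=
  Fin.ne_of_val_ne (by have := (h.1 q hq).1; omega)

lemma le_of_mem_map_snd (h : IsMChain m w u L) {c : Fin n} (hc : c ∈ L.map Prod.snd) :
    m ≤ c := by
  obtain ⟨q, hq, rfl⟩ := List.mem_map.1 hc
  exact (h.1 q hq).2

lemma invLength_eq (h : IsMChain m w u L) : invLength u = invLength w + L.length := by
  simpa [← h.2.1] using h.2.2 L.length le_rfl

lemma invLength_mul_swap_head (h : IsMChain m w u (p :: L)) :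
    invLength (w * swap p.1 p.2) = invLength w + 1 := by
  simpa [chainProd] using h.2.2 1 (by simp)

lemma tail (h : IsMChain m w u (p :: L)) : IsMChain m (w * swap p.1 p.2) u L := by
  obtain ⟨hpairs, hu, hlen⟩ := h
  refine ⟨fun q hq => hpairs q (List.mem_cons_of_mem p hq), hu.trans (chainProd_cons p L), ?_⟩
  intro i hi
  have hlen_succ := hlen (i + 1) (by simpa using hi)
  rw [List.take_succ_cons, chainProd_cons] at hlen_succ
  rw [hlen_succ, invLength_mul_swap_head ⟨hpairs, hu, hlen⟩]
  ring

lemma head_lt (h : IsMChain m w u (p :: L)) : w p.1 < w p.2 := by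
  have hp := h.1 p List.mem_cons_self
  refine (invLength_lt_invLength_mul_swap_iff (Fin.lt_def.2 (by omega))).1 ?_
  rw [invLength_mul_swap_head h]
  omega

lemma apply_lt_iff_mem (h : IsMChain m w u L) (hnd : (L.map Prod.snd).Nodup) {c : Fin n}
    (hc : m ≤ c) : u c < w c ↔ c ∈ L.map Prod.snd := by
  induction L generalizing w with
  | nil => simp [h.2.1, chainProd]
  | cons p L ih =>
    obtain ⟨hpL, hndL⟩ := List.nodup_cons.1 hnd
    rw [List.map_cons, List.mem_cons]
    by_cases hcp : c = p.2
    · subst hcp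
      have hfix : u p.2 = w p.1 := by
        rw [h.2.1, chainProd_cons, chainProd_apply_of_forall_ne, Perm.mul_apply, swap_apply_right]
        intro q hq
        exact ⟨h.fst_ne (List.mem_cons_of_mem p hq) hc,
          fun hq2 => hpL (hq2 ▸ List.mem_map_of_mem hq)⟩
      simpa [hfix] using h.head_lt
    · have hih := ih h.tail hndL
      rw [Perm.mul_apply, swap_apply_of_ne_of_ne (h.fst_ne List.mem_cons_self hc).symm hcp] at hih
      simp [hih, hcp]

lemma filter_apply_lt_eq_toFinset (h : IsMChain m w u L) (hnd : (L.map Prod.snd).Nodup) :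
    ({c : Fin n | m ≤ (c : ℕ) ∧ u c < w c} : Finset _) = (L.map Prod.snd).toFinset := by
  ext c
  simp only [mem_filter, mem_univ, true_and, List.mem_toFinset]
  refine ⟨fun hc => (h.apply_lt_iff_mem hnd hc.1).1 hc.2, fun hc => ?_⟩
  have hmc := h.le_of_mem_map_snd hc
  exact ⟨hmc, (h.apply_lt_iff_mem hnd hmc).2 hc⟩

end IsMChain

theorem stmt3_general (n m : ℕ) (hmn : m < n)
    (w u : Equiv.Perm (Fin n)) (h : rmRel m w u) :
    ((Finset.univ.filter fun j : Fin n => (j : ℕ) < m).image w ∪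
      (Finset.univ.filter fun b : Fin n => m ≤ (b : ℕ) ∧ u b < w b).image w).card
      = m + (invLength u - invLength w) := by
  obtain ⟨L, hL, hnd⟩ := h
  have hdisj : Disjoint ({j : Fin n | (j : ℕ) < m} : Finset _) (L.map Prod.snd).toFinset := by
    refine disjoint_left.2 fun c hcm hcL => ?_
    have := hL.le_of_mem_map_snd (List.mem_toFinset.1 hcL)
    simp only [mem_filter, mem_univ, true_and] at hcm
    omega
  rw [hL.filter_apply_lt_eq_toFinset hnd, ← image_union, card_image_of_injective _ w.injective,
    card_union_of_disjoint hdisj, Fin.card_filter_val_lt, List.toFinset_card_of_nodup hnd,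
    List.length_map, hL.invLength_eq]
  omega

/-- if `w →^{r_m} u` then
`{w(1),…,w(m)} ∪ {w(b) : m < b ≤ n, w(b) > u(b)}` has `m + ℓ(u) − ℓ(w)` elements. -/
theorem stmt3 (n m : ℕ) (hn : 1 ≤ n) (hm : 1 ≤ m) (hmn : m < n)
    (w u : Equiv.Perm (Fin n)) (h : rmRel m w u) :
    ((Finset.univ.filter fun j : Fin n => (j : ℕ) < m).image w ∪
      (Finset.univ.filter fun b : Fin n => m ≤ (b : ℕ) ∧ u b < w b).image w).card
      = m + (invLength u - invLength w) :=
  stmt3_general n m hmn w u h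
end

section
/- Let n ≥ 1, let m, p be positive integers with m + p ≤ n, and let u be a permutation of {1,2,…,n}. Then r(m,p) ≤ u in the Bruhat order if and only if max{u(1), u(2), …, u(m)} ≥ m + p. -/
/-- `ρ` is the cyclic permutation `r(m,p)` of `{1,…,n}` (with `x : Fin n` standing for the
element `x+1`): it sends `m ↦ m+p`, sends `m+i ↦ m+i−1` for `1 ≤ i ≤ p`, and fixes all
other elements. -/
def IsRPerm (n m p : ℕ) (ρ : Equiv.Perm (Fin n)) : Prop :=
  ∀ x : Fin n,
    ((x : ℕ) + 1 = m → (ρ x : ℕ) + 1 = m + p) ∧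
    (m < (x : ℕ) + 1 → (x : ℕ) + 1 ≤ m + p → (ρ x : ℕ) + 1 + 1 = (x : ℕ) + 1) ∧
    ((x : ℕ) + 1 ≠ m → ¬(m < (x : ℕ) + 1 ∧ (x : ℕ) + 1 ≤ m + p) → ρ x = x)

/-- The Bruhat order on permutations of `{1,…,n}`: `v ≤ u` iff there is a chain
`v = v₀, v₁, …, v_k = u` where each `v_{j+1} = v_j τ_{ab}` for a transposition `τ_{ab}`
with `ℓ(v_{j+1}) > ℓ(v_j)`. -/
def bruhatLE {n : ℕ} (v u : Equiv.Perm (Fin n)) : Prop :=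
  Relation.ReflTransGen
    (fun x y => ∃ a b : Fin n, a ≠ b ∧ y = x * Equiv.swap a b ∧ invLength x < invLength y)
    v u

/-!
Write `P u` for "one of `u 0, …, u (m - 1)` is at least `m + p - 1`" (positions and values
counted from `0`). A Bruhat step `x ↦ x * swap a b` with `a < b` and `x a < x b` moves the larger
value to the left, so `P` is inherited upwards, and `r(m,p)` satisfies `P`. Conversely, let `u`
satisfy `P` and be such that no inversion of `u` can be undone without losing `P`. Then `u` is
increasing away from position `m - 1`, where it takes the value `m + p - 1`, and these two
properties characterise `r(m,p)`. Undoing an inversion lowers the length, so induction on `ℓ(u)`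
builds a Bruhat chain from `r(m,p)` to `u`.
-/

open Equiv

lemma Equiv.Perm.eq_of_apply_eq_of_strictMonoOn_compl {α : Type*} [LinearOrder α] [Finite α]
    {u v : Perm α} {k : α} (hk : u k = v k) (hu : StrictMonoOn u {k}ᶜ)
    (hv : StrictMonoOn v {k}ᶜ) : u = v := by
  have range_eq (w : Perm α) : Set.range (fun x : {x // x ≠ k} => w x) = {w k}ᶜ := by
    ext y
    refine ⟨?_, fun hy => ⟨⟨w.symm y, fun h => hy (by simp [← h])⟩, by simp⟩⟩
    rintro ⟨x, rfl⟩
    exact w.injective.ne x.2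
  have hu' : StrictMono (fun x : {x // x ≠ k} => u x) := fun x y h => hu x.2 y.2 h
  have hv' : StrictMono (fun x : {x // x ≠ k} => v x) := fun x y h => hv x.2 y.2 h
  have key := (hu'.range_inj hv').1 (by rw [range_eq, range_eq, hk])
  ext x
  by_cases hx : x = k
  · rw [hx, hk]
  · exact congrFun key ⟨x, hx⟩

section Bruhat

variable {n : ℕ}

open Finset in
lemma invLength_lt_mul_swap {w : Perm (Fin n)} {a b : Fin n} (hab : a < b) (h : w a < w b) :
    invLength w < invLength (w * swap a b) := by
  set σ := swap a b
  set I' := univ.filter fun q : Fin n × Fin n => q.1 < q.2 ∧ w (σ q.2) < w (σ q.1)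
  have hab_mem : (a, b) ∈ I' := by simpa [I', σ] using ⟨hab, h⟩
  -- an inversion `(i, j)` of `w` goes to `(σ i, σ j)` if `σ` keeps it in order, else to itself
  have hle : invLength w ≤ #(I'.erase (a, b)) := by
    refine card_le_card_of_injOn (fun q => if σ q.1 < σ q.2 then (σ q.1, σ q.2) else q) ?_ ?_
    · rintro ⟨i, j⟩ hq
      simp only [coe_filter, coe_erase, mem_univ, true_and, I', Set.mem_ofPred_eq,
        Set.mem_sdiff, Set.mem_singleton_iff] at hq ⊢
      simp only [σ, swap_apply_def] at *
      split_ifs <;> grind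
    · rintro ⟨i₁, j₁⟩ hq₁ ⟨i₂, j₂⟩ hq₂ heq
      simp only [coe_filter, mem_univ, true_and, Set.mem_ofPred_eq] at hq₁ hq₂
      have := σ.injective
      dsimp only at heq
      split_ifs at heq <;> grind
  rw [card_erase_of_mem hab_mem] at hle
  have := card_pos.2 ⟨_, hab_mem⟩
  change _ < #I'
  omega

lemma apply_lt_of_invLength_lt_mul_swap {w : Perm (Fin n)} {a b : Fin n} (hab : a < b)
    (h : invLength w < invLength (w * swap a b)) : w a < w b := by
  refine lt_of_le_of_ne (le_of_not_gt fun hba => ?_) (w.injective.ne hab.ne)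
  have := invLength_lt_mul_swap hab (w := w * swap a b) (by simpa using hba)
  rw [mul_swap_mul_self] at this
  omega

def HasLargePrefixEntry (m t : ℕ) (u : Perm (Fin n)) : Prop :=
  ∃ j : Fin n, (j : ℕ) < m ∧ t ≤ (u j : ℕ)

lemma hasLargePrefixEntry_iff_le_sup {m t : ℕ} {u : Perm (Fin n)} :
    HasLargePrefixEntry m t u ↔
      t + 1 ≤ (Finset.univ.filter fun j : Fin n => (j : ℕ) < m).sup
        (fun j => (u j : ℕ) + 1) := by
  rw [Finset.le_sup_iff (by simp)]
  simp only [Finset.mem_filter, Finset.mem_univ, true_and, Nat.add_le_add_iff_right,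
    HasLargePrefixEntry]

lemma HasLargePrefixEntry.mul_swap {m t : ℕ} {u : Perm (Fin n)} {a b : Fin n}
    (hu : HasLargePrefixEntry m t u) (hab : a < b) (h : u a < u b) :
    HasLargePrefixEntry m t (u * swap a b) := by
  obtain ⟨j, hj, hjt⟩ := hu
  by_cases hja : j = a ∨ j = b
  · refine ⟨a, ?_, ?_⟩
    · rcases hja with rfl | rfl
      · exact hj
      · exact (Fin.lt_def.1 hab).trans hj
    · rw [Perm.mul_apply, swap_apply_left]
      rcases hja with rfl | rfl
      · exact hjt.trans (Fin.le_def.1 h.le)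
      · exact hjt
  · rw [not_or] at hja
    exact ⟨j, hj, by rwa [Perm.mul_apply, swap_apply_of_ne_of_ne hja.1 hja.2]⟩

lemma HasLargePrefixEntry.of_bruhatLE {m t : ℕ} {u v : Perm (Fin n)} (hvu : bruhatLE v u)
    (hv : HasLargePrefixEntry m t v) : HasLargePrefixEntry m t u := by
  induction hvu with
  | refl => exact hv
  | tail _ step ih =>
    obtain ⟨a, b, hne, rfl, hlen⟩ := step
    rcases hne.lt_or_gt with hab | hba
    · exact ih.mul_swap hab (apply_lt_of_invLength_lt_mul_swap hab hlen)
    · rw [swap_comm] at hlen ⊢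
      exact ih.mul_swap hba (apply_lt_of_invLength_lt_mul_swap hba hlen)

def IsSwapMinimal (m t : ℕ) (u : Perm (Fin n)) : Prop :=
  ∀ a b : Fin n, a < b → u b < u a → ¬HasLargePrefixEntry m t (u * swap a b)

namespace IsSwapMinimal

variable {m t : ℕ} {u : Perm (Fin n)} {j k : Fin n}

lemma strictMonoOn_compl (hmin : IsSwapMinimal m t u) (hj : (j : ℕ) < m) (hjt : t ≤ u j) :
    StrictMonoOn u {j}ᶜ := by
  intro a ha b hb hab
  by_contra hba
  refine hmin a b hab (lt_of_le_of_ne (not_lt.1 hba) (u.injective.ne hab.ne')) ⟨j, hj, ?_⟩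
  rwa [Perm.mul_apply, swap_apply_of_ne_of_ne (Ne.symm ha) (Ne.symm hb)]

lemma strictMonoOn_prefix (hmin : IsSwapMinimal m t u) (hj : (j : ℕ) < m) (hjt : t ≤ u j) :
    StrictMonoOn u {x | (x : ℕ) < m} := by
  intro a _ b hb hab
  by_contra hba
  have hlt : u b < u a := lt_of_le_of_ne (not_lt.1 hba) (u.injective.ne hab.ne')
  refine hmin a b hab hlt ⟨b, hb, ?_⟩
  rw [Perm.mul_apply, swap_apply_right]
  by_cases haj : a = j
  · rwa [← haj] at hjt
  by_cases hbj : b = j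
  · subst hbj
    exact hjt.trans (Fin.le_def.1 hlt.le)
  · exact absurd (hmin.strictMonoOn_compl hj hjt haj hbj hab) hba

lemma le_apply_last (hmin : IsSwapMinimal m t u) (hk : (k : ℕ) + 1 = m)
    (hj : (j : ℕ) < m) (hjt : t ≤ u j) : t ≤ u k := by
  rcases (Fin.le_def.2 (by omega : (j : ℕ) ≤ k)).lt_or_eq with hjk | rfl
  · have hkm : (k : ℕ) < m := by omega
    exact hjt.trans (Fin.le_def.1 (hmin.strictMonoOn_prefix hj hjt hj hkm hjk).le)
  · exact hjt

lemma val_apply_last (hmin : IsSwapMinimal m t u) (hk : (k : ℕ) + 1 = m) (hkt : (k : ℕ) ≤ t)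
    (htn : t < n) (hku : t ≤ u k) : (u k : ℕ) = t := by
  by_contra hne
  set c := u.symm ⟨t, htn⟩
  have hc : (u c : ℕ) = t := by simp [c]
  rcases (show c ≠ k by rintro rfl; exact hne hc).lt_or_gt with hck | hkc
  · have hcm : (c : ℕ) < m := by rw [Fin.lt_def] at hck; omega
    -- both `c` and `k` are large prefix entries, so no inversion of `u` is left
    have hmono : StrictMono u := by
      intro a b hab
      by_cases hbk : b = k
      · have hbm : (b : ℕ) < m := by rw [hbk]; omega
        have ham : (a : ℕ) < m := by rw [Fin.lt_def] at hab; omega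
        exact hmin.strictMonoOn_prefix hcm hc.ge ham hbm hab
      by_cases hak : a = k
      · subst hak
        exact hmin.strictMonoOn_compl hcm hc.ge hck.ne' (hck.trans hab).ne' hab
      · exact hmin.strictMonoOn_compl (by omega) hku hak hbk hab
    have hid : u k = k := congrFun ((hmono.range_inj strictMono_id).1 (by simp)) k
    rw [hid] at hku hne
    omega
  · exact hmin k c hkc (by rw [Fin.lt_def]; omega) ⟨k, by omega, by simp [hc]⟩

end IsSwapMinimal

namespace IsRPerm

variable {m p : ℕ} {ρ : Perm (Fin n)} {k : Fin n}

lemma val_apply_last (hρ : IsRPerm n m p ρ) (hk : (k : ℕ) + 1 = m) :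
    (ρ k : ℕ) = m + p - 1 := by
  have := (hρ k).1 hk
  omega

lemma val_apply_of_ne (hρ : IsRPerm n m p ρ) {x : Fin n} (hx : (x : ℕ) + 1 ≠ m) :
    (ρ x : ℕ) = if m ≤ x ∧ (x : ℕ) < m + p then (x : ℕ) - 1 else x := by
  obtain ⟨-, hshift, hfix⟩ := hρ x
  split_ifs with h
  · have := hshift (by omega) (by omega)
    omega
  · rw [hfix hx (by omega)]

lemma strictMonoOn_compl (hρ : IsRPerm n m p ρ) (hk : (k : ℕ) + 1 = m) :
    StrictMonoOn ρ {k}ᶜ := by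
  intro a ha b hb hab
  have ha' : (a : ℕ) + 1 ≠ m := fun h => ha (Fin.ext (by omega))
  have hb' : (b : ℕ) + 1 ≠ m := fun h => hb (Fin.ext (by omega))
  rw [Fin.lt_def] at hab ⊢
  rw [hρ.val_apply_of_ne ha', hρ.val_apply_of_ne hb']
  split_ifs <;> omega

lemma hasLargePrefixEntry (hρ : IsRPerm n m p ρ) (hm : 1 ≤ m) (hmp : m + p ≤ n) :
    HasLargePrefixEntry m (m + p - 1) ρ :=
  ⟨⟨m - 1, by omega⟩, Nat.sub_lt hm one_pos,
    (hρ.val_apply_last (Nat.sub_add_cancel hm)).ge⟩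

end IsRPerm

lemma IsSwapMinimal.eq_of_isRPerm {m p : ℕ} {ρ u : Perm (Fin n)} (hρ : IsRPerm n m p ρ)
    (hm : 1 ≤ m) (hmp : m + p ≤ n) (hmin : IsSwapMinimal m (m + p - 1) u)
    (hu : HasLargePrefixEntry m (m + p - 1) u) : u = ρ := by
  obtain ⟨j, hj, hjt⟩ := hu
  let k : Fin n := ⟨m - 1, by omega⟩
  have hk : (k : ℕ) + 1 = m := Nat.sub_add_cancel hm
  have hkt := hmin.le_apply_last hk hj hjt
  refine Perm.eq_of_apply_eq_of_strictMonoOn_compl (Fin.ext ?_)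
    (hmin.strictMonoOn_compl (by omega) hkt) (hρ.strictMonoOn_compl hk)
  rw [hmin.val_apply_last hk (by omega) (by omega) hkt, hρ.val_apply_last hk]

lemma bruhatLE_of_hasLargePrefixEntry {m p : ℕ} {ρ : Perm (Fin n)} (hρ : IsRPerm n m p ρ)
    (hm : 1 ≤ m) (hmp : m + p ≤ n) (u : Perm (Fin n))
    (hu : HasLargePrefixEntry m (m + p - 1) u) : bruhatLE ρ u := by
  by_cases hmin : IsSwapMinimal m (m + p - 1) u
  · rw [hmin.eq_of_isRPerm hρ hm hmp hu]
    exact Relation.ReflTransGen.refl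
  · obtain ⟨a, b, hab, hba, hv⟩ : ∃ a b, a < b ∧ u b < u a ∧
        HasLargePrefixEntry m (m + p - 1) (u * swap a b) := by
      simpa [IsSwapMinimal] using hmin
    have hlen : invLength (u * swap a b) < invLength u := by
      simpa using invLength_lt_mul_swap hab (w := u * swap a b) (by simpa using hba)
    exact (bruhatLE_of_hasLargePrefixEntry hρ hm hmp _ hv).tail
      ⟨a, b, hab.ne, (mul_swap_mul_self a b u).symm, hlen⟩
termination_by invLength u

end Bruhat

theorem stmt9_general (n m p : ℕ) (hm : 1 ≤ m) (hmp : m + p ≤ n)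
    (ρ : Equiv.Perm (Fin n)) (hρ : IsRPerm n m p ρ) (u : Equiv.Perm (Fin n)) :
    bruhatLE ρ u ↔
      m + p ≤ (Finset.univ.filter fun j : Fin n => (j : ℕ) < m).sup
        (fun j => (u j : ℕ) + 1) := by
  rw [show m + p = m + p - 1 + 1 by omega, ← hasLargePrefixEntry_iff_le_sup]
  exact ⟨fun h => (hρ.hasLargePrefixEntry hm hmp).of_bruhatLE h,
    bruhatLE_of_hasLargePrefixEntry hρ hm hmp u⟩

/-- `r(m,p) ≤ u` in the Bruhat order iff `max{u(1),…,u(m)} ≥ m + p`. -/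
theorem stmt9 (n m p : ℕ) (hn : 1 ≤ n) (hm : 1 ≤ m) (hp : 1 ≤ p) (hmp : m + p ≤ n)
    (ρ : Equiv.Perm (Fin n)) (hρ : IsRPerm n m p ρ) (u : Equiv.Perm (Fin n)) :
    bruhatLE ρ u ↔
      m + p ≤ (Finset.univ.filter fun j : Fin n => (j : ℕ) < m).sup
        (fun j => (u j : ℕ) + 1) :=
  stmt9_general n m p hm hmp ρ hρ u
end
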